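/- For all integers N, ℓ ≥ 1 and k with ℓ+1 ≤ k ≤ N, the fractional chromatic number of the restricted uncertainty graph 𝒰_{N,ℓ,k} is at most 4ℓ: there exist finitely many independent sets I_1,…,I_t of 𝒰_{N,ℓ,k} and nonnegative weights w_1,…,w_t with Σ_{j=1}^t w_j ≤ 4ℓ such that Σ_{j : I_j ∋ π} w_j ≥ 1 for every vertex π ∈ S_{N,k}. -/

import Mathlib

/-- δ(π,σ) for permutations of `Fin N`. -/
def permDelta {N : ℕ} (π σ : Equiv.Perm (Fin N)) : ℕ :=
  Finset.univ.sup fun i => Nat.dist (π.symm i) (σ.symm i)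

/-- A permutation `π'` of `[N]` extends the `k`-subpermutation `π` if they
agree on the first `k` coordinates. -/
def ExtendsP {N k : ℕ} (π' : Equiv.Perm (Fin N)) (π : Fin k ↪ Fin N) : Prop :=
  ∀ i : Fin k, ∀ h : (i : ℕ) < N, π' ⟨i, h⟩ = π i

/-- δ(π,σ) for `k`-subpermutations: minimum of `permDelta` over extensions. -/
noncomputable def subDelta {N k : ℕ} (π σ : Fin k ↪ Fin N) : ℕ :=
  sInf {d : ℕ | ∃ π' σ' : Equiv.Perm (Fin N),
    ExtendsP π' π ∧ ExtendsP σ' σ ∧ permDelta π' σ' = d}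

lemma permDelta_comm {N : ℕ} (π σ : Equiv.Perm (Fin N)) :
    permDelta π σ = permDelta σ π := by
  simp [permDelta, Nat.dist_comm]

lemma subDelta_comm {N k : ℕ} (π σ : Fin k ↪ Fin N) :
    subDelta π σ = subDelta σ π := by
  unfold subDelta
  congr 1
  ext d
  constructor <;> rintro ⟨a, b, h1, h2, h3⟩ <;>
    exact ⟨b, a, h2, h1, by rw [← h3, permDelta_comm]⟩

/-- The `k`-restricted uncertainty graph `𝒰_{N,ℓ,k}` on vertex set `S_{N,k}`,
the set of `k`-subpermutations of `[N]`.  For `k = N` this is the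
(unrestricted) uncertainty graph `𝒰_{N,ℓ}`. -/
noncomputable def uncGraph (N ℓ k : ℕ) : SimpleGraph (Fin k ↪ Fin N) where
  Adj π σ := (∃ h : 0 < k, π ⟨0, h⟩ ≠ σ ⟨0, h⟩) ∧ subDelta π σ ≤ ℓ
  symm := ⟨by
    rintro π σ ⟨⟨h, hne⟩, hd⟩
    exact ⟨⟨h, hne.symm⟩, by rwa [subDelta_comm]⟩⟩
  loopless := ⟨by rintro π ⟨⟨h, hne⟩, -⟩; exact hne rfl⟩

lemma exists_extendsP {N k : ℕ} (hkN : k ≤ N) (π : Fin k ↪ Fin N) :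
    ∃ π' : Equiv.Perm (Fin N), ExtendsP π' π := by
  classical
  set f : Fin N → Fin N := fun x => if h : (x : ℕ) < k then π ⟨x, h⟩ else x with hf
  have hcard : Fintype.card (Fin N) = (Finset.univ : Finset (Fin N)).card := by simp
  have hsub : Finset.image f (Finset.univ.filter fun x : Fin N => (x : ℕ) < k) ⊆ Finset.univ :=
    Finset.subset_univ _
  have hinj : Set.InjOn f (Finset.univ.filter fun x : Fin N => (x : ℕ) < k) := by
    intro x hx y hy hxy
    simp only [Finset.coe_filter, Set.mem_setOf_eq] at hx hy
    simp only [hf, dif_pos hx.2, dif_pos hy.2] at hxy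
    have := π.injective hxy
    exact Fin.ext (by simpa [Fin.ext_iff] using this)
  obtain ⟨g, hg⟩ := Finset.exists_equiv_extend_of_card_eq hcard hsub hinj
  refine ⟨g.trans (Equiv.subtypeUnivEquiv fun x => Finset.mem_univ x), ?_⟩
  intro i h
  have hmem : (⟨i, h⟩ : Fin N) ∈ Finset.univ.filter fun x : Fin N => (x : ℕ) < k := by
    simp [i.isLt]
  have := hg _ hmem
  simpa [hf, i.isLt] using this

lemma adj_first {N ℓ k : ℕ} (hkN : k ≤ N) (hk : ℓ + 1 ≤ k) {π σ : Fin k ↪ Fin N}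
    (h0k : 0 < k) (hne : π ⟨0, h0k⟩ ≠ σ ⟨0, h0k⟩) (hd : subDelta π σ ≤ ℓ) :
    ∃ j : Fin k, 1 ≤ (j : ℕ) ∧ (j : ℕ) ≤ ℓ ∧ π j = σ ⟨0, h0k⟩ := by
  obtain ⟨π', hπ'⟩ := exists_extendsP hkN π
  obtain ⟨σ', hσ'⟩ := exists_extendsP hkN σ
  have hnon : {d : ℕ | ∃ π' σ' : Equiv.Perm (Fin N),
      ExtendsP π' π ∧ ExtendsP σ' σ ∧ permDelta π' σ' = d}.Nonempty :=
    ⟨_, π', σ', hπ', hσ', rfl⟩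
  obtain ⟨a, b, ha, hb, hab⟩ := Nat.sInf_mem hnon
  have hdle : permDelta a b ≤ ℓ := by rw [hab]; exact hd
  have h0N : 0 < N := lt_of_lt_of_le h0k hkN
  set x := σ ⟨0, h0k⟩ with hx
  have hbx : b ⟨0, h0N⟩ = x := hb ⟨0, h0k⟩ h0N
  have hsymm : b.symm x = ⟨0, h0N⟩ := by rw [← hbx]; exact b.symm_apply_apply _
  have hdle2 : Finset.univ.sup (fun i : Fin N =>
      Nat.dist ((a.symm i : Fin N) : ℕ) ((b.symm i : Fin N) : ℕ)) ≤ ℓ := hdle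
  have hle : Nat.dist ((a.symm x : Fin N) : ℕ) ((b.symm x : Fin N) : ℕ) ≤ ℓ :=
    le_trans (Finset.le_sup (f := fun i : Fin N => Nat.dist ((a.symm i : Fin N) : ℕ) ((b.symm i : Fin N) : ℕ)) (Finset.mem_univ x)) hdle2
  rw [hsymm] at hle
  have hjl : ((a.symm x : Fin N) : ℕ) ≤ ℓ := by
    simpa [Nat.dist] using hle
  have hjk : ((a.symm x : Fin N) : ℕ) < k :=
    lt_of_le_of_lt hjl (lt_of_lt_of_le (Nat.lt_succ_self ℓ) hk)
  have hax : π ⟨(a.symm x : ℕ), hjk⟩ = x := by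
    have h2 := ha ⟨(a.symm x : ℕ), hjk⟩ (a.symm x).isLt
    have h3 : (⟨((a.symm x : Fin N) : ℕ), (a.symm x).isLt⟩ : Fin N) = a.symm x := rfl
    rw [h3] at h2
    rw [← h2, a.apply_symm_apply]
  refine ⟨⟨(a.symm x : ℕ), hjk⟩, ?_, hjl, hax⟩
  by_contra hlt
  push_neg at hlt
  simp only [Fin.val_mk] at hlt
  have h0 : ((a.symm x : Fin N) : ℕ) = 0 := by omega
  apply hne
  have h0' : (⟨((a.symm x : Fin N) : ℕ), hjk⟩ : Fin k) = ⟨0, h0k⟩ := Fin.ext h0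
  rw [← h0']
  exact hax

section Aux
open Classical in
/-- constraint pattern for vertex `π`: its first value must be in the set,
the values at positions `2..ℓ+1` must be out. -/
noncomputable def covC (ℓ : ℕ) {N k : ℕ} (h0k : 0 < k) (π : Fin k ↪ Fin N) (x : Fin N) :
    Option Bool :=
  if x = π ⟨0, h0k⟩ then some true
  else if ∃ j : Fin k, 1 ≤ (j : ℕ) ∧ (j : ℕ) ≤ ℓ ∧ π j = x then some false
  else none

/-- independent set of the uncertainty graph determined by a subset `f` of values. -/
def covI (ℓ : ℕ) {N k : ℕ} (h0k : 0 < k) (f : Fin N → Bool) : Set (Fin k ↪ Fin N) :=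
  {π | ∀ x b, covC ℓ h0k π x = some b → f x = b}

lemma covC_first (ℓ : ℕ) {N k : ℕ} (h0k : 0 < k) (π : Fin k ↪ Fin N) :
    covC ℓ h0k π (π ⟨0, h0k⟩) = some true := by
  simp [covC]

lemma covC_mid (ℓ : ℕ) {N k : ℕ} (h0k : 0 < k) (π : Fin k ↪ Fin N) (j : Fin k)
    (hj1 : 1 ≤ (j : ℕ)) (hjl : (j : ℕ) ≤ ℓ) :
    covC ℓ h0k π (π j) = some false := by
  rw [covC, if_neg, if_pos]
  · exact ⟨j, hj1, hjl, rfl⟩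
  · intro hc
    have := π.injective hc
    have := congrArg Fin.val this
    simp at this
    omega

lemma covC_none (ℓ : ℕ) {N k : ℕ} (h0k : 0 < k) (π : Fin k ↪ Fin N) (x : Fin N)
    (h1 : x ≠ π ⟨0, h0k⟩) (h2 : ∀ j : Fin k, 1 ≤ (j : ℕ) → (j : ℕ) ≤ ℓ → π j ≠ x) :
    covC ℓ h0k π x = none := by
  rw [covC, if_neg h1, if_neg]
  rintro ⟨j, hj1, hjl, hjx⟩
  exact h2 j hj1 hjl hjx

/-- the key sum computation: the total weight of the sets containing `π`. -/
lemma covI_sum (ℓ : ℕ) {N k : ℕ} (h0k : 0 < k) (hk : ℓ + 1 ≤ k) (π : Fin k ↪ Fin N)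
    (p : ℝ) :
    ∑ f : Fin N → Bool, (covI ℓ h0k f).indicator
        (fun _ => ∏ x, (if f x then p else 1 - p)) π
      = p * (1 - p) ^ ℓ := by
  classical
  set g : Bool → ℝ := fun b => if b then p else 1 - p with hg
  set G : Fin N → Bool → ℝ := fun x b =>
    (covC ℓ h0k π x).elim (g b) (fun c => if b = c then g b else 0) with hG
  have hA : ∀ f : Fin N → Bool,
      (covI ℓ h0k f).indicator (fun _ => ∏ x, g (f x)) π = ∏ x, G x (f x) := by
    intro f
    rw [Set.indicator_apply]
    by_cases hf : π ∈ covI ℓ h0k f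
    · rw [if_pos hf]
      refine Finset.prod_congr rfl fun x _ => ?_
      rcases hC : covC ℓ h0k π x with _ | c
      · simp [hG, hC]
      · have := hf x c hC
        simp [hG, hC, this]
    · rw [if_neg hf]
      symm
      simp only [covI, Set.mem_setOf_eq] at hf
      push_neg at hf
      obtain ⟨x, b, hC, hb⟩ := hf
      refine Finset.prod_eq_zero (Finset.mem_univ x) ?_
      simp [hG, hC, hb]
  calc ∑ f : Fin N → Bool, (covI ℓ h0k f).indicator (fun _ => ∏ x, g (f x)) π
      = ∑ f : Fin N → Bool, ∏ x, G x (f x) := Finset.sum_congr rfl fun f _ => hA f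
    _ = ∏ x, ∑ b, G x b := (Fintype.prod_sum G).symm
    _ = p * (1 - p) ^ ℓ := by
        -- compute ∑ b, G x b =: H x, then the product over the special positions
        have hH : ∀ x, (∑ b, G x b) = (covC ℓ h0k π x).elim 1 g := by
          intro x
          rw [Fintype.sum_bool]
          rcases hC : covC ℓ h0k π x with _ | c
          · simp [hG, hC, hg]
          · cases c <;> simp [hG, hC, hg]
        simp_rw [hH]
        -- special positions
        have hlk : ∀ j : Fin ℓ, (j : ℕ) + 1 < k := fun j => by have := j.isLt; omega
        set φ : Fin ℓ → Fin N := fun j => π ⟨(j : ℕ) + 1, hlk j⟩ with hφ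
        have hφinj : Function.Injective φ := by
          intro a b hab
          have := π.injective hab
          have := congrArg Fin.val this
          simp at this
          exact Fin.ext this
        set T : Finset (Fin N) := Finset.image φ Finset.univ with hT
        have hTcard : T.card = ℓ := by
          rw [hT, Finset.card_image_of_injective _ hφinj, Finset.card_univ, Fintype.card_fin]
        have hπ0T : π ⟨0, h0k⟩ ∉ T := by
          rw [hT]
          simp only [Finset.mem_image, Finset.mem_univ, true_and, not_exists]
          intro j hj
          have := π.injective hj
          have := congrArg Fin.val this
          simp at this
        have hsub : insert (π ⟨0, h0k⟩) T ⊆ Finset.univ := Finset.subset_univ _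
        rw [← Finset.prod_subset hsub ?_]
        · rw [Finset.prod_insert hπ0T, covC_first]
          have : ∀ x ∈ T, ((covC ℓ h0k π x).elim 1 g : ℝ) = 1 - p := by
            intro x hx
            rw [hT] at hx
            simp only [Finset.mem_image, Finset.mem_univ, true_and] at hx
            obtain ⟨j, rfl⟩ := hx
            rw [hφ]
            rw [covC_mid ℓ h0k π ⟨(j : ℕ) + 1, hlk j⟩ (by simp) (by have := j.isLt; simp)]
            simp [hg]
          rw [Finset.prod_congr rfl this, Finset.prod_const, hTcard]
          simp [hg]
        · intro x _ hx
          simp only [Finset.mem_insert, not_or] at hx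
          rw [covC_none ℓ h0k π x hx.1]
          · rfl
          · intro j hj1 hjl hjx
            apply hx.2
            rw [hT]
            simp only [Finset.mem_image, Finset.mem_univ, true_and]
            refine ⟨⟨(j : ℕ) - 1, by omega⟩, ?_⟩
            rw [hφ]
            beta_reduce
            have h5 : (⟨(j : ℕ) - 1 + 1, hlk ⟨(j : ℕ) - 1, by omega⟩⟩ : Fin k) = j :=
              Fin.ext (by simp; omega)
            rw [h5]
            exact hjx
end Aux


lemma covI_indep (N ℓ k : ℕ) (hkN : k ≤ N) (hk : ℓ + 1 ≤ k) (h0k : 0 < k)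
    (f : Fin N → Bool) :
    ∀ u ∈ covI ℓ h0k f, ∀ v ∈ covI ℓ h0k f, ¬ (uncGraph N ℓ k).Adj u v := by
  intro u hu v hv hadj
  obtain ⟨⟨h0k', hne⟩, hd⟩ := hadj
  obtain ⟨j, hj1, hjl, hjx⟩ := adj_first hkN hk h0k' hne hd
  have htrue : f (v ⟨0, h0k'⟩) = true := hv _ _ (covC_first ℓ h0k v)
  have hfalse : f (u j) = false := hu _ _ (covC_mid ℓ h0k u j hj1 hjl)
  rw [hjx, htrue] at hfalse
  exact Bool.noConfusion hfalse

/-- For `N, ℓ ≥ 1` and `ℓ+1 ≤ k ≤ N`, the fractional chromatic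
number of `𝒰_{N,ℓ,k}` is at most `4ℓ`: there are finitely many independent sets
`I₁,…,I_t` with nonnegative weights summing to at most `4ℓ` so that the total
weight of the sets containing any given vertex is at least `1`. -/
theorem fractionalChromatic_restricted_uncGraph_le (N ℓ k : ℕ)
    (hℓ : 1 ≤ ℓ) (hk : ℓ + 1 ≤ k) (hkN : k ≤ N) :
    ∃ (t : ℕ) (I : Fin t → Set (Fin k ↪ Fin N)) (w : Fin t → ℝ),
      (∀ j, 0 ≤ w j) ∧
      (∀ j, ∀ u ∈ I j, ∀ v ∈ I j, ¬ (uncGraph N ℓ k).Adj u v) ∧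
      (∑ j, w j ≤ 4 * (ℓ : ℝ)) ∧
      (∀ π : Fin k ↪ Fin N, 1 ≤ ∑ j, (I j).indicator (fun _ => w j) π) := by
  classical
  have h0k : 0 < k := lt_of_lt_of_le (Nat.succ_pos ℓ) hk
  have hℓR : (1:ℝ) ≤ (ℓ:ℝ) := by exact_mod_cast hℓ
  set p : ℝ := 1 / (2 * ℓ) with hpdef
  have hp0 : 0 ≤ p := by rw [hpdef]; positivity
  have hp2 : p ≤ 1/2 := by
    rw [hpdef, div_le_div_iff₀ (by linarith) (by norm_num)]
    linarith
  have h1p : 0 ≤ 1 - p := by linarith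
  set t := Fintype.card (Fin N → Bool) with ht
  set e : (Fin N → Bool) ≃ Fin t := Fintype.equivFin _ with he
  refine ⟨t, fun j => covI ℓ h0k (e.symm j),
    fun j => (4 * (ℓ:ℝ)) * ∏ x, (if e.symm j x then p else 1 - p), ?_, ?_, ?_, ?_⟩
  · intro j
    refine mul_nonneg (by positivity) (Finset.prod_nonneg fun x _ => ?_)
    split
    · exact hp0
    · exact h1p
  · intro j
    exact covI_indep N ℓ k hkN hk h0k (e.symm j)
  · have hcomp := Equiv.sum_comp e.symm (fun f : Fin N → Bool =>
      (4 * (ℓ:ℝ)) * ∏ x, (if f x then p else 1 - p))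
    rw [hcomp, ← Finset.mul_sum]
    have hsum : ∑ f : Fin N → Bool, ∏ x, (if f x then p else 1 - p) = 1 := by
      rw [← Fintype.prod_sum (fun (_ : Fin N) (b : Bool) => if b then p else 1 - p)]
      have hb : (∑ b : Bool, (if b then p else 1 - p)) = 1 := by
        rw [Fintype.sum_bool]; simp
      simp only [hb, Finset.prod_const_one]
    rw [hsum, mul_one]
  · intro π
    have key := covI_sum ℓ h0k hk π p
    have hstep : ∀ f : Fin N → Bool,
        (covI ℓ h0k f).indicator
            (fun _ => (4 * (ℓ:ℝ)) * ∏ x, (if f x then p else 1 - p)) π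
          = (4 * (ℓ:ℝ)) * (covI ℓ h0k f).indicator
              (fun _ => ∏ x, (if f x then p else 1 - p)) π := by
      intro f
      rw [Set.indicator_apply, Set.indicator_apply]
      split
      · rfl
      · rw [mul_zero]
    have hcomp := Equiv.sum_comp e.symm (fun f : Fin N → Bool =>
      (covI ℓ h0k f).indicator
        (fun _ => (4 * (ℓ:ℝ)) * ∏ x, (if f x then p else 1 - p)) π)
    rw [hcomp, Finset.sum_congr rfl (fun f _ => hstep f), ← Finset.mul_sum, key]
    have hℓ0 : (ℓ:ℝ) ≠ 0 := by linarith
    have h4p : (4 * (ℓ:ℝ)) * p = 2 := by rw [hpdef]; field_simp; ring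
    have hℓp : (ℓ:ℝ) * p = 1/2 := by rw [hpdef]; field_simp
    have hbern : (1/2 : ℝ) ≤ (1 - p)^ℓ := by
      have hb := one_add_mul_le_pow (a := -p) (by linarith) ℓ
      have h1 : 1 + (ℓ:ℝ) * (-p) = 1/2 := by rw [mul_neg, hℓp]; norm_num
      have h2 : (1 + -p : ℝ) = 1 - p := by ring
      rw [h1, h2] at hb
      exact hb
    calc (1:ℝ) = 2 * (1/2) := by norm_num
      _ ≤ 2 * (1-p)^ℓ := by
          have := mul_le_mul_of_nonneg_left hbern (by norm_num : (0:ℝ) ≤ 2)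
          linarith
      _ = ((4 * (ℓ:ℝ)) * p) * (1-p)^ℓ := by rw [h4p]
      _ = (4 * (ℓ:ℝ)) * (p * (1-p)^ℓ) := by ring
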